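/- With notation as above, let α, β be tuples over R with deg(α) = r, and let ℓ, m be integers with 0 ≤ ℓ ≤ z_α and 0 ≤ m ≤ z_β. Set t = ℓ + q^r·m. Then F_t(u_{z_{α∙β}}) ≡ F_ℓ(u_{z_α}) · F_m(u_{z_β}) (mod 𝔪). -/

import Mathlib

open Finset

section MCdef
variable {V : Type*} [CommRing V]

/-- Multiplicative congruence mod an ideal: `x = y * w` with `w ≡ 1`. -/
def MCI (I : Ideal V) (x y : V) : Prop := ∃ w : V, x = y * w ∧ w - 1 ∈ I

namespace MCI
variable {I : Ideal V} {x y z x' y' : V}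

theorem refl (x : V) : MCI I x x := ⟨1, by ring, by simpa using I.zero_mem⟩

theorem of_eq (h : x = y) : MCI I x y := h ▸ refl x

theorem mul (h : MCI I x y) (h' : MCI I x' y') : MCI I (x * x') (y * y') := by
  obtain ⟨w, rfl, hw⟩ := h
  obtain ⟨w', rfl, hw'⟩ := h'
  refine ⟨w * w', by ring, ?_⟩
  have : w * w' - 1 = w * (w' - 1) + (w - 1) := by ring
  rw [this]
  exact I.add_mem (I.mul_mem_left _ hw') hw

theorem trans (h : MCI I x y) (h' : MCI I y z) : MCI I x z := by
  obtain ⟨w, rfl, hw⟩ := h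
  obtain ⟨w', rfl, hw'⟩ := h'
  refine ⟨w' * w, by ring, ?_⟩
  have : w' * w - 1 = w' * (w - 1) + (w' - 1) := by ring
  rw [this]
  exact I.add_mem (I.mul_mem_left _ hw) hw'

theorem pow (h : MCI I x y) (n : ℕ) : MCI I (x ^ n) (y ^ n) := by
  induction n with
  | zero => simpa using refl (1 : V)
  | succ n ih => rw [pow_succ, pow_succ]; exact ih.mul h

theorem prod {ι : Type*} {s : Finset ι} {f g : ι → V}
    (h : ∀ i ∈ s, MCI I (f i) (g i)) :
    MCI I (∏ i ∈ s, f i) (∏ i ∈ s, g i) := by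
  classical
  induction s using Finset.induction with
  | empty => simpa using refl (1 : V)
  | insert a s hns ih =>
    rw [Finset.prod_insert hns, Finset.prod_insert hns]
    exact (h a (Finset.mem_insert_self a s)).mul
      (ih fun i hi => h i (Finset.mem_insert_of_mem hi))

end MCI
end MCdef

section LocalAux
variable {V : Type*} [CommRing V] [IsLocalRing V]

theorem isUnit_of_sub_one_mem {w : V} (hw : w - 1 ∈ IsLocalRing.maximalIdeal V) :
    IsUnit w := by
  by_contra h
  have hwm : w ∈ IsLocalRing.maximalIdeal V := h
  have : (1 : V) ∈ IsLocalRing.maximalIdeal V := by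
    have := Ideal.sub_mem _ hwm hw
    simpa using this
  exact (IsLocalRing.maximalIdeal.isMaximal V).ne_top (Ideal.eq_top_of_isUnit_mem _ this isUnit_one)

theorem MCI.symm {x y : V} (h : MCI (IsLocalRing.maximalIdeal V) x y) :
    MCI (IsLocalRing.maximalIdeal V) y x := by
  obtain ⟨w, rfl, hw⟩ := h
  obtain ⟨wu, rfl⟩ := isUnit_of_sub_one_mem hw
  refine ⟨(wu⁻¹ : Vˣ), by simp [mul_assoc], ?_⟩
  have : ((wu⁻¹ : Vˣ) : V) - 1 = (wu⁻¹ : Vˣ) * (1 - wu) := by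
    simp [mul_sub]
  rw [this]
  exact Ideal.mul_mem_left _ _ (by simpa using (IsLocalRing.maximalIdeal V).neg_mem hw)

/-- adding a maximal-ideal element to a unit is an `MCI`-congruence -/
theorem MCI_add_of_isUnit {x s : V} (hx : IsUnit x)
    (hs : s ∈ IsLocalRing.maximalIdeal V) :
    MCI (IsLocalRing.maximalIdeal V) (x + s) x := by
  obtain ⟨xu, rfl⟩ := hx
  refine ⟨1 + (xu⁻¹ : Vˣ) * s, ?_, ?_⟩
  case refine_2 =>
    have h2 : (1 + (xu⁻¹ : Vˣ) * s) - 1 = (xu⁻¹ : Vˣ) * s := by ring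
    rw [h2]
    exact Ideal.mul_mem_left _ _ hs
  have : (xu : V) * ((xu⁻¹ : Vˣ) * s) = s := by
    rw [← mul_assoc]; simp
  rw [mul_add, mul_one, this]

theorem MCI_add_of_dvd {x z : V} {π : V} {s : ℕ}
    (hπm : π ∈ IsLocalRing.maximalIdeal V) (hx : x ∣ π ^ s) :
    MCI (IsLocalRing.maximalIdeal V) (x + π ^ (s + 1) * z) x := by
  obtain ⟨e, he⟩ := hx
  refine ⟨1 + e * π * z, ?_, ?_⟩
  · rw [pow_succ, he]; ring
  · have h2 : (1 + e * π * z) - 1 = (e * z) * π := by ring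
    rw [h2]
    exact Ideal.mul_mem_left _ _ hπm

theorem isUnit_add_of_mem {x s : V} (hx : IsUnit x)
    (hs : s ∈ IsLocalRing.maximalIdeal V) : IsUnit (x + s) := by
  by_contra h
  have hm : x + s ∈ IsLocalRing.maximalIdeal V := h
  have : x ∈ IsLocalRing.maximalIdeal V := by
    have := Ideal.sub_mem _ hm hs
    simpa using this
  exact (this : ¬IsUnit x) hx

end LocalAux

section Digits
variable {V : Type*} [CommRing V]

theorem u_step {q : ℕ} (hq : 2 ≤ q) {π : V} {u : ℕ → V} (hu0 : u 0 = 0)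
    (hudig : ∀ n : ℕ, u n = ∑ i ∈ Finset.range (Nat.digits q n).length,
        u ((Nat.digits q n).getD i 0) * π ^ i)
    (a n : ℕ) (ha : a < q) : u (a + q * n) = u a + π * u n := by
  rcases Nat.eq_zero_or_pos (a + q * n) with h0 | hpos
  · have ha0 : a = 0 := by omega
    have hn0 : n = 0 := by
      rcases Nat.eq_zero_or_pos n with h | h
      · exact h
      · exfalso; nlinarith
    subst ha0; subst hn0; simp [hu0]
  · have hdig : Nat.digits q (a + q * n) = a :: Nat.digits q n := by
      rw [Nat.digits_def' (by omega : 1 < q) hpos]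
      congr 1
      · rw [Nat.add_mul_mod_self_left, Nat.mod_eq_of_lt ha]
      · rw [Nat.add_mul_div_left _ _ (by omega : 0 < q), Nat.div_eq_of_lt ha, zero_add]
    rw [hudig (a + q * n), hdig]
    rw [List.length_cons, Finset.sum_range_succ']
    simp only [List.getD_cons_succ, List.getD_cons_zero, pow_zero, mul_one, pow_succ]
    rw [hudig n, Finset.mul_sum, add_comm]
    congr 1
    refine Finset.sum_congr rfl fun i _ => by ring

theorem u_split {q : ℕ} (hq : 2 ≤ q) {π : V} {u : ℕ → V} (hu0 : u 0 = 0)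
    (hudig : ∀ n : ℕ, u n = ∑ i ∈ Finset.range (Nat.digits q n).length,
        u ((Nat.digits q n).getD i 0) * π ^ i) :
    ∀ (r a b : ℕ), a < q ^ r → u (a + q ^ r * b) = u a + π ^ r * u b := by
  intro r
  induction r with
  | zero =>
    intro a b ha
    rw [pow_zero] at ha
    interval_cases a
    simp [hu0]
  | succ r ih =>
    intro a b ha
    have hq0 : 0 < q := by omega
    have ha0 : a % q < q := Nat.mod_lt _ hq0
    have ha1 : a / q < q ^ r := by
      rw [Nat.div_lt_iff_lt_mul hq0]
      calc a < q ^ (r + 1) := ha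
      _ = q ^ r * q := by rw [pow_succ]
    have hdecomp : a = a % q + q * (a / q) := by
      rw [Nat.mod_add_div]
    have key : a + q ^ (r + 1) * b = a % q + q * (a / q + q ^ r * b) := by
      conv_lhs => rw [hdecomp, pow_succ']
      ring
    rw [key, u_step hq hu0 hudig _ _ ha0, ih _ b ha1]
    have ha' : u a = u (a % q) + π * u (a / q) := by
      conv_lhs => rw [hdecomp]
      exact u_step hq hu0 hudig _ _ ha0
    rw [ha', pow_succ]
    ring

end Digits

section Units
variable {V : Type*} [CommRing V] [IsLocalRing V]

theorem u_sub_unit {q : ℕ} {u : ℕ → V}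
    (hurep : ∀ a : V, ∃! i : ℕ, i < q ∧ a - u i ∈ IsLocalRing.maximalIdeal V)
    {c a : ℕ} (hc : c < q) (ha : a < q) (hne : c ≠ a) : IsUnit (u c - u a) := by
  by_contra h
  have hm : u c - u a ∈ IsLocalRing.maximalIdeal V := h
  obtain ⟨i, _, huniq⟩ := hurep (u c)
  have e1 : c = i := huniq c ⟨hc, by simp⟩
  have e2 : a = i := huniq a ⟨ha, hm⟩
  exact hne (e1.trans e2.symm)

theorem u_sub_dvd {q : ℕ} (hq : 2 ≤ q) {π : V} {u : ℕ → V} (hu0 : u 0 = 0)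
    (hπm : π ∈ IsLocalRing.maximalIdeal V)
    (hudig : ∀ n : ℕ, u n = ∑ i ∈ Finset.range (Nat.digits q n).length,
        u ((Nat.digits q n).getD i 0) * π ^ i)
    (hurep : ∀ a : V, ∃! i : ℕ, i < q ∧ a - u i ∈ IsLocalRing.maximalIdeal V) :
    ∀ (r : ℕ) (c a : ℕ), c < q ^ (r + 1) → a < q ^ (r + 1) → c ≠ a →
      (u c - u a) ∣ π ^ r := by
  intro r
  induction r with
  | zero =>
    intro c a hc ha hne
    rw [pow_one] at hc ha
    rw [pow_zero]
    exact (u_sub_unit hurep hc ha hne).dvd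
  | succ r ih =>
    intro c a hc ha hne
    have hq0 : 0 < q := by omega
    have hcd : u c = u (c % q) + π * u (c / q) := by
      conv_lhs => rw [← Nat.mod_add_div c q]
      exact u_step hq hu0 hudig _ _ (Nat.mod_lt _ hq0)
    have had : u a = u (a % q) + π * u (a / q) := by
      conv_lhs => rw [← Nat.mod_add_div a q]
      exact u_step hq hu0 hudig _ _ (Nat.mod_lt _ hq0)
    have hdiff : u c - u a = (u (c % q) - u (a % q)) + π * (u (c / q) - u (a / q)) := by
      rw [hcd, had]; ring
    by_cases h0 : c % q = a % q
    · have h1 : c / q ≠ a / q := by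
        intro h
        exact hne (by rw [← Nat.mod_add_div c q, ← Nat.mod_add_div a q, h0, h])
      have hc1 : c / q < q ^ (r + 1) := by
        rw [Nat.div_lt_iff_lt_mul hq0]
        calc c < q ^ (r + 2) := hc
        _ = q ^ (r + 1) * q := by rw [pow_succ]
      have ha1 : a / q < q ^ (r + 1) := by
        rw [Nat.div_lt_iff_lt_mul hq0]
        calc a < q ^ (r + 2) := ha
        _ = q ^ (r + 1) * q := by rw [pow_succ]
      rw [hdiff, h0, sub_self, zero_add, pow_succ']
      exact mul_dvd_mul_left π (ih _ _ hc1 ha1 h1)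
    · rw [hdiff]
      exact (isUnit_add_of_mem
        (u_sub_unit hurep (Nat.mod_lt _ hq0) (Nat.mod_lt _ hq0) h0)
        (Ideal.mul_mem_right _ _ hπm)).dvd

end Units

section ProdSplit
variable {M : Type*} [CommMonoid M]

theorem prod_range_mul' (f : ℕ → M) (Q m : ℕ) :
    ∏ k ∈ Finset.range (Q * m), f k =
      ∏ b ∈ Finset.range m, ∏ a ∈ Finset.range Q, f (a + Q * b) := by
  induction m with
  | zero => simp
  | succ m ih =>
    rw [Finset.prod_range_succ, ← ih, Nat.mul_succ, Finset.prod_range_add]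
    congr 1
    refine Finset.prod_congr rfl fun a _ => by rw [add_comm]

theorem prod_erase_split (f : ℕ → M) (p Q : ℕ) (hp : 0 < p) {c : ℕ} (hc : c < p * Q) :
    ∏ a ∈ (Finset.range (p * Q)).erase c, f a =
      (∏ a0 ∈ (Finset.range p).erase (c % p), ∏ a1 ∈ Finset.range Q, f (a0 + p * a1)) *
        ∏ a1 ∈ (Finset.range Q).erase (c / p), f (c % p + p * a1) := by
  classical
  have hc0 : c % p < p := Nat.mod_lt _ hp
  have hc1 : c / p < Q := Nat.div_lt_iff_lt_mul hp |>.mpr (by rw [mul_comm]; exact hc)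
  set S : Finset (ℕ × ℕ) :=
    ((Finset.range p).erase (c % p) ×ˢ Finset.range Q) ∪
      ({c % p} ×ˢ (Finset.range Q).erase (c / p)) with hS
  have hdisj : Disjoint ((Finset.range p).erase (c % p) ×ˢ Finset.range Q)
      ({c % p} ×ˢ (Finset.range Q).erase (c / p)) := by
    rw [Finset.disjoint_left]
    rintro ⟨x, y⟩ hx hy
    simp only [Finset.mem_product, Finset.mem_erase, Finset.mem_singleton,
      Finset.mem_range] at hx hy
    exact hx.1.1 hy.1
  have hprod : ∏ z ∈ S, f (z.1 + p * z.2) =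
      (∏ a0 ∈ (Finset.range p).erase (c % p), ∏ a1 ∈ Finset.range Q, f (a0 + p * a1)) *
        ∏ a1 ∈ (Finset.range Q).erase (c / p), f (c % p + p * a1) := by
    rw [hS, Finset.prod_union hdisj, Finset.prod_product, Finset.prod_product]
    rw [Finset.prod_singleton]
  rw [← hprod]
  refine Finset.prod_bij (fun a _ => ((a % p : ℕ), (a / p : ℕ))) ?_ ?_ ?_ ?_
  · intro a ha
    simp only [Finset.mem_erase, Finset.mem_range] at ha
    simp only [hS, Finset.mem_union, Finset.mem_product, Finset.mem_erase,
      Finset.mem_singleton, Finset.mem_range]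
    have h1 : a % p < p := Nat.mod_lt _ hp
    have h2 : a / p < Q := Nat.div_lt_iff_lt_mul hp |>.mpr (by rw [mul_comm]; exact ha.2)
    by_cases h : a % p = c % p
    · refine Or.inr ⟨h, ?_, h2⟩
      intro hd
      exact ha.1 (by rw [← Nat.mod_add_div a p, ← Nat.mod_add_div c p, h, hd])
    · exact Or.inl ⟨⟨h, h1⟩, h2⟩
  · intro a _ a' _ h
    simp only [Prod.mk.injEq] at h
    rw [← Nat.mod_add_div a p, ← Nat.mod_add_div a' p, h.1, h.2]
  · rintro ⟨x, y⟩ hz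
    simp only [hS, Finset.mem_union, Finset.mem_product, Finset.mem_erase,
      Finset.mem_singleton, Finset.mem_range] at hz
    have hx : x < p := by
      rcases hz with ⟨⟨_, h⟩, _⟩ | ⟨h, _⟩
      · exact h
      · omega
    have hy : y < Q := by
      rcases hz with ⟨_, h⟩ | ⟨_, _, h⟩
      · exact h
      · exact h
    have hmem : x + p * y < p * Q := by
      calc x + p * y < p + p * y := by omega
      _ = p * (y + 1) := by ring
      _ ≤ p * Q := Nat.mul_le_mul_left _ (by omega)
    have hmod : (x + p * y) % p = x := by
      rw [Nat.add_mul_mod_self_left, Nat.mod_eq_of_lt hx]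
    have hdiv : (x + p * y) / p = y := by
      rw [Nat.add_mul_div_left _ _ hp, Nat.div_eq_of_lt hx, zero_add]
    have hne : x + p * y ≠ c := by
      intro h
      rcases hz with ⟨⟨h1, _⟩, _⟩ | ⟨h1, h2, _⟩
      · exact h1 (by rw [← h, hmod])
      · exact h2 (by rw [← h, hdiv])
    exact ⟨x + p * y, by simp only [Finset.mem_erase, Finset.mem_range]; exact ⟨hne, hmem⟩,
      by simp [hmod, hdiv]⟩
  · intro a ha
    simp only
    conv_lhs => rw [← Nat.mod_add_div a p]

end ProdSplit

section Residue
variable {V : Type*} [CommRing V] [IsLocalRing V]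

theorem MCI_of_sub_mem {x y : V} (h : x - y ∈ IsLocalRing.maximalIdeal V)
    (hy : IsUnit y) : MCI (IsLocalRing.maximalIdeal V) x y := by
  obtain ⟨yu, rfl⟩ := hy
  refine ⟨1 + (yu⁻¹ : Vˣ) * (x - yu), ?_, ?_⟩
  · have : (yu : V) * ((yu⁻¹ : Vˣ) * (x - yu)) = x - yu := by
      rw [← mul_assoc]; simp
    rw [mul_add, mul_one, this]; ring
  · have h2 : (1 + (yu⁻¹ : Vˣ) * (x - yu)) - 1 = (yu⁻¹ : Vˣ) * (x - yu) := by ring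
    rw [h2]
    exact Ideal.mul_mem_left _ _ h

theorem H_cong {q : ℕ} {u : ℕ → V}
    (hurep : ∀ a : V, ∃! i : ℕ, i < q ∧ a - u i ∈ IsLocalRing.maximalIdeal V)
    {c d : ℕ} (hc : c < q) (hd : d < q) :
    MCI (IsLocalRing.maximalIdeal V)
      (∏ a ∈ (Finset.range q).erase c, (u c - u a))
      (∏ a ∈ (Finset.range q).erase d, (u d - u a)) := by
  classical
  set I := IsLocalRing.maximalIdeal V
  set φ : V →+* V ⧸ I := Ideal.Quotient.mk I with hφ
  have hinj : ∀ i < q, ∀ j < q, φ (u i) = φ (u j) → i = j := by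
    intro i hi j hj h
    have hmem : u i - u j ∈ I := Ideal.Quotient.eq.mp h
    obtain ⟨w, _, huniq⟩ := hurep (u i)
    exact (huniq i ⟨hi, by simp⟩).trans (huniq j ⟨hj, hmem⟩).symm
  set T : Finset (V ⧸ I) := (Finset.range q).image (fun i => φ (u i)) with hT
  have hall : ∀ x : V ⧸ I, x ∈ T := by
    intro x
    obtain ⟨v, rfl⟩ := Ideal.Quotient.mk_surjective x
    obtain ⟨i, ⟨hi, hmem⟩, _⟩ := hurep v
    rw [hT, Finset.mem_image]
    exact ⟨i, Finset.mem_range.mpr hi, (Ideal.Quotient.eq.mpr hmem).symm⟩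
  have key : ∀ e, e < q → φ (∏ a ∈ (Finset.range q).erase e, (u e - u a)) =
      ∏ z ∈ T.erase 0, z := by
    intro e he
    rw [map_prod]
    have step1 : ∏ a ∈ (Finset.range q).erase e, φ (u e - u a) =
        ∏ y ∈ T.erase (φ (u e)), (φ (u e) - y) := by
      refine Finset.prod_bij (fun a _ => φ (u a)) ?_ ?_ ?_ ?_
      · intro a ha
        simp only [Finset.mem_erase, Finset.mem_range] at ha
        refine Finset.mem_erase.mpr ⟨?_, Finset.mem_image.mpr ⟨a, Finset.mem_range.mpr ha.2, rfl⟩⟩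
        intro h
        exact ha.1 (hinj a ha.2 e he h)
      · intro a ha a' ha' h
        simp only [Finset.mem_erase, Finset.mem_range] at ha ha'
        exact hinj a ha.2 a' ha'.2 h
      · intro y hy
        rw [Finset.mem_erase, hT, Finset.mem_image] at hy
        obtain ⟨hne, a, haq, rfl⟩ := hy
        refine ⟨a, Finset.mem_erase.mpr ⟨?_, haq⟩, rfl⟩
        intro h
        exact hne (by rw [h])
      · intro a _
        rw [map_sub]
    rw [step1]
    refine Finset.prod_bij (fun y _ => φ (u e) - y) ?_ ?_ ?_ ?_
    · intro y hy
      rw [Finset.mem_erase] at hy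
      exact Finset.mem_erase.mpr ⟨sub_ne_zero.mpr (Ne.symm hy.1), hall _⟩
    · intro y _ y' _ h
      exact sub_right_injective h
    · intro z hz
      rw [Finset.mem_erase] at hz
      refine ⟨φ (u e) - z, Finset.mem_erase.mpr ⟨?_, hall _⟩,
        by simpa using sub_sub_cancel (φ (u e)) z⟩
      intro h
      exact hz.1 (sub_eq_self.mp h)
    · intro y _; rfl
  have hsub : (∏ a ∈ (Finset.range q).erase c, (u c - u a)) -
      (∏ a ∈ (Finset.range q).erase d, (u d - u a)) ∈ I := by
    rw [← Ideal.Quotient.eq]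
    rw [key c hc, key d hd]
  have hunit : IsUnit (∏ a ∈ (Finset.range q).erase d, (u d - u a)) := by
    refine Finset.prod_induction _ IsUnit (fun _ _ => IsUnit.mul) isUnit_one ?_
    intro a ha
    rw [Finset.mem_erase, Finset.mem_range] at ha
    exact u_sub_unit hurep hd ha.2 (Ne.symm ha.1)
  exact MCI_of_sub_mem hsub hunit

end Residue

section Gcong
variable {V : Type*} [CommRing V] [IsLocalRing V]

theorem G_cong {q : ℕ} (hq : 2 ≤ q) {π : V} {u : ℕ → V} (hu0 : u 0 = 0)
    (hπm : π ∈ IsLocalRing.maximalIdeal V)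
    (hudig : ∀ n : ℕ, u n = ∑ i ∈ Finset.range (Nat.digits q n).length,
        u ((Nat.digits q n).getD i 0) * π ^ i)
    (hurep : ∀ a : V, ∃! i : ℕ, i < q ∧ a - u i ∈ IsLocalRing.maximalIdeal V) :
    ∀ (r c d : ℕ), c < q ^ r → d < q ^ r →
      MCI (IsLocalRing.maximalIdeal V)
        (∏ a ∈ (Finset.range (q ^ r)).erase c, (u c - u a))
        (∏ a ∈ (Finset.range (q ^ r)).erase d, (u d - u a)) := by
  intro r
  have hq0 : 0 < q := by omega
  induction r with
  | zero =>
    intro c d hc hd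
    rw [pow_zero] at hc hd
    interval_cases c
    interval_cases d
    exact MCI.refl _
  | succ r ih =>
    have key : ∀ e, e < q ^ (r + 1) →
        MCI (IsLocalRing.maximalIdeal V)
          (∏ a ∈ (Finset.range (q ^ (r + 1))).erase e, (u e - u a))
          ((∏ a0 ∈ (Finset.range q).erase (e % q), (u (e % q) - u a0)) ^ (q ^ r) *
            (π ^ (q ^ r - 1) *
              ∏ a1 ∈ (Finset.range (q ^ r)).erase (e / q), (u (e / q) - u a1))) := by
      intro e he
      have he' : e < q * q ^ r := by rw [← pow_succ']; exact he
      have he0 : e % q < q := Nat.mod_lt _ hq0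
      have he1 : e / q < q ^ r := Nat.div_lt_iff_lt_mul hq0 |>.mpr (by rw [mul_comm]; exact he')
      have hue : u e = u (e % q) + π * u (e / q) := by
        conv_lhs => rw [← Nat.mod_add_div e q]
        exact u_step hq hu0 hudig _ _ he0
      have hsplit : ∏ a ∈ (Finset.range (q ^ (r + 1))).erase e, (u e - u a) =
          (∏ a0 ∈ (Finset.range q).erase (e % q), ∏ a1 ∈ Finset.range (q ^ r),
            (u e - u (a0 + q * a1))) *
          ∏ a1 ∈ (Finset.range (q ^ r)).erase (e / q), (u e - u (e % q + q * a1)) := by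
        rw [pow_succ']
        exact prod_erase_split _ q (q ^ r) hq0 he'
      have hsecond : ∏ a1 ∈ (Finset.range (q ^ r)).erase (e / q), (u e - u (e % q + q * a1)) =
          π ^ (q ^ r - 1) * ∏ a1 ∈ (Finset.range (q ^ r)).erase (e / q), (u (e / q) - u a1) := by
        have : ∀ a1 ∈ (Finset.range (q ^ r)).erase (e / q),
            u e - u (e % q + q * a1) = π * (u (e / q) - u a1) := by
          intro a1 _
          rw [hue, u_step hq hu0 hudig _ _ he0]
          ring
        rw [Finset.prod_congr rfl this, Finset.prod_mul_distrib, Finset.prod_const,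
          Finset.card_erase_of_mem (Finset.mem_range.mpr he1), Finset.card_range]
      have hfirst : MCI (IsLocalRing.maximalIdeal V)
          (∏ a0 ∈ (Finset.range q).erase (e % q), ∏ a1 ∈ Finset.range (q ^ r),
            (u e - u (a0 + q * a1)))
          ((∏ a0 ∈ (Finset.range q).erase (e % q), (u (e % q) - u a0)) ^ (q ^ r)) := by
        rw [← Finset.prod_pow]
        refine MCI.prod ?_
        intro a0 ha0
        rw [Finset.mem_erase, Finset.mem_range] at ha0
        have hconst : (u (e % q) - u a0) ^ q ^ r =
            ∏ _a1 ∈ Finset.range (q ^ r), (u (e % q) - u a0) := by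
          rw [Finset.prod_const, Finset.card_range]
        rw [hconst]
        refine MCI.prod ?_
        intro a1 ha1
        rw [Finset.mem_range] at ha1
        have heq : u e - u (a0 + q * a1) =
            (u (e % q) - u a0) + π * (u (e / q) - u a1) := by
          rw [hue, u_step hq hu0 hudig _ _ (by omega : a0 < q)]
          ring
        rw [heq]
        exact MCI_add_of_isUnit (u_sub_unit hurep he0 ha0.2 (Ne.symm ha0.1))
          (Ideal.mul_mem_right _ _ hπm)
      rw [hsplit, hsecond]
      exact hfirst.mul (MCI.refl _)
    intro c d hc hd
    have hc1 : c / q < q ^ r := Nat.div_lt_iff_lt_mul hq0 |>.mpr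
      (by rw [mul_comm, ← pow_succ']; exact hc)
    have hd1 : d / q < q ^ r := Nat.div_lt_iff_lt_mul hq0 |>.mpr
      (by rw [mul_comm, ← pow_succ']; exact hd)
    have mid : MCI (IsLocalRing.maximalIdeal V)
        ((∏ a0 ∈ (Finset.range q).erase (c % q), (u (c % q) - u a0)) ^ (q ^ r) *
          (π ^ (q ^ r - 1) *
            ∏ a1 ∈ (Finset.range (q ^ r)).erase (c / q), (u (c / q) - u a1)))
        ((∏ a0 ∈ (Finset.range q).erase (d % q), (u (d % q) - u a0)) ^ (q ^ r) *
          (π ^ (q ^ r - 1) *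
            ∏ a1 ∈ (Finset.range (q ^ r)).erase (d / q), (u (d / q) - u a1))) :=
      ((H_cong hurep (Nat.mod_lt _ hq0) (Nat.mod_lt _ hq0)).pow _).mul
        ((MCI.refl _).mul (ih _ _ hc1 hd1))
    exact (key c hc).trans (mid.trans (key d hd).symm)

end Gcong

section Inj
variable {V : Type*} [CommRing V] [IsLocalRing V] [IsDomain V]

theorem u_ne {q : ℕ} (hq : 2 ≤ q) {π : V} (hπ0 : π ≠ 0) {u : ℕ → V} (hu0 : u 0 = 0)
    (hπm : π ∈ IsLocalRing.maximalIdeal V)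
    (hudig : ∀ n : ℕ, u n = ∑ i ∈ Finset.range (Nat.digits q n).length,
        u ((Nat.digits q n).getD i 0) * π ^ i)
    (hurep : ∀ a : V, ∃! i : ℕ, i < q ∧ a - u i ∈ IsLocalRing.maximalIdeal V)
    {n n' : ℕ} (h : n ≠ n') : u n ≠ u n' := by
  intro heq
  have hn : n < q ^ (max n n' + 1) := by
    calc n ≤ max n n' := Nat.le_max_left _ _
    _ < q ^ (max n n') := Nat.lt_pow_self (by omega : 1 < q)
    _ ≤ q ^ (max n n' + 1) := Nat.pow_le_pow_right (by omega) (Nat.le_succ _)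
  have hn' : n' < q ^ (max n n' + 1) := by
    calc n' ≤ max n n' := Nat.le_max_right _ _
    _ < q ^ (max n n') := Nat.lt_pow_self (by omega : 1 < q)
    _ ≤ q ^ (max n n' + 1) := Nat.pow_le_pow_right (by omega) (Nat.le_succ _)
  have hd := u_sub_dvd hq hu0 hπm hudig hurep (max n n') n n' hn hn' h
  rw [heq, sub_self] at hd
  exact pow_ne_zero _ hπ0 (zero_dvd_iff.mp hd)

end Inj

/-- Corollary 3.4 of the paper: for tuples `α, β` over the representatives with
`r = deg α`, and integers `0 ≤ ℓ ≤ z α`, `0 ≤ m ≤ z β`, setting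
`t = ℓ + q ^ r * m`, one has `F t (u (z (α∙β))) ≡ F ℓ (u (z α)) * F m (u (z β))
(mod 𝔪)`. -/
theorem F_at_concat_of_le
    (V : Type*) [CommRing V] [IsDomain V] [IsDiscreteValuationRing V]
    (q : ℕ) (hq : 2 ≤ q)
    (π : V) (hπ : Irreducible π)
    (hmax : IsLocalRing.maximalIdeal V = Ideal.span {π})
    (u : ℕ → V) (hu0 : u 0 = 0)
    (hurep : ∀ a : V, ∃! i : ℕ, i < q ∧ a - u i ∈ IsLocalRing.maximalIdeal V)
    (hudig : ∀ n : ℕ, u n = ∑ i ∈ Finset.range (Nat.digits q n).length,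
        u ((Nat.digits q n).getD i 0) * π ^ i)
    (F : ℕ → V → V) (hF0 : ∀ x : V, F 0 x = 1)
    (hF : ∀ (n : ℕ) (x : V),
        (∏ k ∈ Finset.range n, (u n - u k)) * F n x = ∏ k ∈ Finset.range n, (x - u k))
    (α β : List ℕ) (hα : ∀ d ∈ α, d < q) (hβ : ∀ d ∈ β, d < q)
    (hαne : α ≠ []) (hβne : β ≠ [])
    (ℓ m : ℕ) (hℓ : ℓ ≤ Nat.ofDigits q α) (hm : m ≤ Nat.ofDigits q β) :
    F (ℓ + q ^ α.length * m) (u ((Nat.ofDigits q (α ++ β) : ℕ))) -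
        F ℓ (u ((Nat.ofDigits q α : ℕ))) * F m (u ((Nat.ofDigits q β : ℕ))) ∈
      IsLocalRing.maximalIdeal V := by
  classical
  have hπm : π ∈ IsLocalRing.maximalIdeal V := hmax ▸ Ideal.mem_span_singleton_self π
  have hπ0 : π ≠ 0 := hπ.ne_zero
  obtain ⟨s, hs⟩ : ∃ s, α.length = s + 1 :=
    ⟨α.length - 1, by have := List.length_pos_iff.mpr hαne; omega⟩
  -- notation
  set I := IsLocalRing.maximalIdeal V with hI
  set zα := Nat.ofDigits q α with hzαdef
  set zβ := Nat.ofDigits q β with hzβdef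
  set r := α.length with hrdef
  set Q := q ^ r with hQdef
  have hq0 : 0 < q := by omega
  have hzα : zα < Q := Nat.ofDigits_lt_base_pow_length (by omega) hα
  have hℓQ : ℓ < Q := lt_of_le_of_lt hℓ hzα
  have hzαβ : (Nat.ofDigits q (α ++ β)) = zα + Q * zβ := by
    simp only [hzαdef, hzβdef, hQdef, hrdef]
    exact Nat.ofDigits_append
  rw [hzαβ]
  -- u facts
  have husplit : ∀ (a b : ℕ), a < Q → u (a + Q * b) = u a + π ^ r * u b :=
    fun a b ha => u_split hq hu0 hudig r a b ha
  have huX : u (zα + Q * zβ) = u zα + π ^ r * u zβ := husplit zα zβ hzα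
  have hut : u (ℓ + Q * m) = u ℓ + π ^ r * u m := husplit ℓ m hℓQ
  -- congruence factor lemma
  have hfac : ∀ (c a : ℕ) (z : V), c < Q → a < Q → c ≠ a →
      MCI I ((u c - u a) + π ^ r * z) (u c - u a) := by
    intro c a z hc ha hne
    rw [hQdef] at hc ha
    rw [hs] at hc ha ⊢
    exact MCI_add_of_dvd hπm (u_sub_dvd hq hu0 hπm hudig hurep s c a hc ha hne)
  -- named products
  set Gz : V := ∏ a ∈ (Finset.range Q).erase zα, (u zα - u a) with hGzdef
  set Gl : V := ∏ a ∈ (Finset.range Q).erase ℓ, (u ℓ - u a) with hGldef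
  -- ====== E1 : numerator ======
  have hsplitP : ∏ k ∈ Finset.range (ℓ + Q * m), (u (zα + Q * zβ) - u k) =
      (∏ b ∈ Finset.range m, ∏ a ∈ Finset.range Q, (u (zα + Q * zβ) - u (a + Q * b))) *
        ∏ a ∈ Finset.range ℓ, (u (zα + Q * zβ) - u (Q * m + a)) := by
    rw [show ℓ + Q * m = Q * m + ℓ from by omega, Finset.prod_range_add, prod_range_mul']
  have hinner : ∀ b ∈ Finset.range m,
      MCI I (∏ a ∈ Finset.range Q, (u (zα + Q * zβ) - u (a + Q * b)))
        (π ^ r * (u zβ - u b) * Gz) := by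
    intro b _
    rw [← Finset.mul_prod_erase (Finset.range Q)
      (fun a => u (zα + Q * zβ) - u (a + Q * b)) (Finset.mem_range.mpr hzα)]
    have h1 : u (zα + Q * zβ) - u (zα + Q * b) = π ^ r * (u zβ - u b) := by
      rw [huX, husplit zα b hzα]; ring
    refine MCI.mul (MCI.of_eq h1) (MCI.prod ?_)
    intro a ha
    rw [Finset.mem_erase, Finset.mem_range] at ha
    have h2 : u (zα + Q * zβ) - u (a + Q * b) =
        (u zα - u a) + π ^ r * (u zβ - u b) := by
      rw [huX, husplit a b ha.2]; ring
    rw [h2]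
    exact hfac zα a _ hzα ha.2 (Ne.symm ha.1)
  have htail : MCI I (∏ a ∈ Finset.range ℓ, (u (zα + Q * zβ) - u (Q * m + a)))
      (∏ k ∈ Finset.range ℓ, (u zα - u k)) := by
    refine MCI.prod ?_
    intro a ha
    rw [Finset.mem_range] at ha
    have haQ : a < Q := by omega
    have h2 : u (zα + Q * zβ) - u (Q * m + a) =
        (u zα - u a) + π ^ r * (u zβ - u m) := by
      rw [huX, show Q * m + a = a + Q * m from by omega, husplit a m haQ]; ring
    rw [h2]
    exact hfac zα a _ hzα haQ (by omega)
  have hE1 : MCI I (∏ k ∈ Finset.range (ℓ + Q * m), (u (zα + Q * zβ) - u k))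
      ((π ^ (r * m) * ∏ k ∈ Finset.range m, (u zβ - u k)) * Gz ^ m *
        ∏ k ∈ Finset.range ℓ, (u zα - u k)) := by
    rw [hsplitP]
    have hc : ∏ b ∈ Finset.range m, (π ^ r * (u zβ - u b) * Gz) =
        (π ^ (r * m) * ∏ k ∈ Finset.range m, (u zβ - u k)) * Gz ^ m := by
      rw [Finset.prod_mul_distrib, Finset.prod_mul_distrib, Finset.prod_const,
        Finset.prod_const, Finset.card_range, ← pow_mul]
    rw [← hc]
    exact (MCI.prod hinner).mul htail
  -- ====== E2 : denominator ======
  have hsplitD : ∏ k ∈ Finset.range (ℓ + Q * m), (u (ℓ + Q * m) - u k) =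
      (∏ b ∈ Finset.range m, ∏ a ∈ Finset.range Q, (u (ℓ + Q * m) - u (a + Q * b))) *
        ∏ a ∈ Finset.range ℓ, (u (ℓ + Q * m) - u (Q * m + a)) := by
    rw [show ℓ + Q * m = Q * m + ℓ from by omega, Finset.prod_range_add, prod_range_mul']
  have hinner' : ∀ b ∈ Finset.range m,
      MCI I (∏ a ∈ Finset.range Q, (u (ℓ + Q * m) - u (a + Q * b)))
        (π ^ r * (u m - u b) * Gl) := by
    intro b _
    rw [← Finset.mul_prod_erase (Finset.range Q)
      (fun a => u (ℓ + Q * m) - u (a + Q * b)) (Finset.mem_range.mpr hℓQ)]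
    have h1 : u (ℓ + Q * m) - u (ℓ + Q * b) = π ^ r * (u m - u b) := by
      rw [hut, husplit ℓ b hℓQ]; ring
    refine MCI.mul (MCI.of_eq h1) (MCI.prod ?_)
    intro a ha
    rw [Finset.mem_erase, Finset.mem_range] at ha
    have h2 : u (ℓ + Q * m) - u (a + Q * b) =
        (u ℓ - u a) + π ^ r * (u m - u b) := by
      rw [hut, husplit a b ha.2]; ring
    rw [h2]
    exact hfac ℓ a _ hℓQ ha.2 (Ne.symm ha.1)
  have htail' : ∏ a ∈ Finset.range ℓ, (u (ℓ + Q * m) - u (Q * m + a)) =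
      ∏ k ∈ Finset.range ℓ, (u ℓ - u k) := by
    refine Finset.prod_congr rfl ?_
    intro a ha
    rw [Finset.mem_range] at ha
    have haQ : a < Q := by omega
    rw [hut, show Q * m + a = a + Q * m from by omega, husplit a m haQ]
    ring
  have hE2 : MCI I (∏ k ∈ Finset.range (ℓ + Q * m), (u (ℓ + Q * m) - u k))
      ((π ^ (r * m) * ∏ k ∈ Finset.range m, (u m - u k)) * Gl ^ m *
        ∏ k ∈ Finset.range ℓ, (u ℓ - u k)) := by
    rw [hsplitD, htail']
    have hc : ∏ b ∈ Finset.range m, (π ^ r * (u m - u b) * Gl) =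
        (π ^ (r * m) * ∏ k ∈ Finset.range m, (u m - u k)) * Gl ^ m := by
      rw [Finset.prod_mul_distrib, Finset.prod_mul_distrib, Finset.prod_const,
        Finset.prod_const, Finset.card_range, ← pow_mul]
    rw [← hc]
    exact (MCI.prod hinner').mul (MCI.refl _)
  -- ====== G congruence ======
  have hGcong : MCI I Gz Gl := by
    rw [hGzdef, hGldef, hQdef]
    exact G_cong hq hu0 hπm hudig hurep r zα ℓ (hQdef ▸ hzα) (hQdef ▸ hℓQ)
  -- combine E1 with G congruence
  have hE1' : MCI I (∏ k ∈ Finset.range (ℓ + Q * m), (u (zα + Q * zβ) - u k))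
      ((π ^ (r * m) * ∏ k ∈ Finset.range m, (u zβ - u k)) * Gl ^ m *
        ∏ k ∈ Finset.range ℓ, (u zα - u k)) :=
    hE1.trans (((MCI.refl _).mul (hGcong.pow m)).mul (MCI.refl _))
  -- ====== nonzero facts ======
  have hune : ∀ {n n' : ℕ}, n ≠ n' → u n ≠ u n' :=
    fun h => u_ne hq hπ0 hu0 hπm hudig hurep h
  have hDl : (∏ k ∈ Finset.range ℓ, (u ℓ - u k)) ≠ 0 := by
    rw [Finset.prod_ne_zero_iff]
    intro k hk
    rw [Finset.mem_range] at hk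
    exact sub_ne_zero.mpr (hune (by omega))
  have hDm : (∏ k ∈ Finset.range m, (u m - u k)) ≠ 0 := by
    rw [Finset.prod_ne_zero_iff]
    intro k hk
    rw [Finset.mem_range] at hk
    exact sub_ne_zero.mpr (hune (by omega))
  have hGl0 : Gl ≠ 0 := by
    rw [hGldef, Finset.prod_ne_zero_iff]
    intro a ha
    rw [Finset.mem_erase] at ha
    exact sub_ne_zero.mpr (hune (Ne.symm ha.1))
  have hc0 : π ^ (r * m) * Gl ^ m *
      (∏ k ∈ Finset.range ℓ, (u ℓ - u k)) * (∏ k ∈ Finset.range m, (u m - u k)) ≠ 0 :=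
    mul_ne_zero (mul_ne_zero (mul_ne_zero (pow_ne_zero _ hπ0) (pow_ne_zero _ hGl0)) hDl) hDm
  -- ====== final assembly ======
  obtain ⟨w1, hw1, hw1m⟩ := hE1'
  obtain ⟨w2, hw2, hw2m⟩ := hE2
  have hFt := hF (ℓ + Q * m) (u (zα + Q * zβ))
  have hFl := hF ℓ (u zα)
  have hFm := hF m (u zβ)
  set c0 : V := π ^ (r * m) * Gl ^ m *
      (∏ k ∈ Finset.range ℓ, (u ℓ - u k)) * (∏ k ∈ Finset.range m, (u m - u k)) with hc0def
  have hkey : c0 * (w2 * F (ℓ + Q * m) (u (zα + Q * zβ))) =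
      c0 * (F ℓ (u zα) * F m (u zβ) * w1) := by
    have e1 : c0 * (w2 * F (ℓ + Q * m) (u (zα + Q * zβ))) =
        (∏ k ∈ Finset.range (ℓ + Q * m), (u (ℓ + Q * m) - u k)) *
          F (ℓ + Q * m) (u (zα + Q * zβ)) := by
      rw [hw2, hc0def]; ring
    rw [e1, hFt, hw1, hc0def, ← hFl, ← hFm]
    ring
  have hcancel : w2 * F (ℓ + Q * m) (u (zα + Q * zβ)) =
      F ℓ (u zα) * F m (u zβ) * w1 := mul_left_cancel₀ hc0 hkey
  have hfinal : F (ℓ + Q * m) (u (zα + Q * zβ)) - F ℓ (u zα) * F m (u zβ) =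
      F (ℓ + Q * m) (u (zα + Q * zβ)) * (1 - w2) +
        (F ℓ (u zα) * F m (u zβ)) * (w1 - 1) := by
    linear_combination hcancel
  rw [hfinal]
  refine Ideal.add_mem _ (Ideal.mul_mem_left _ _ ?_) (Ideal.mul_mem_left _ _ hw1m)
  have : (1 : V) - w2 = -(w2 - 1) := by ring
  rw [this]
  exact neg_mem hw2m
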